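/- Let f = sec(2x), g = 2 tan(2x), and (fD) the operator φ ↦ f·φ'. For all n ≥ 1, (fD)^n(g) = 2(n+1)! Σ_{k=0}^{⌊(n−1)/2⌋} F(n,k) f^{n+2+2k} g^{n−1−2k}, where F(n,k) = C_k·C(n−1,2k) with C_k the k-th Catalan number. -/

import Mathlib

open Finset

/-- The operator `fD : φ ↦ f·φ'` where `f = sec(2x)`. -/
noncomputable def fDop (φ : ℝ → ℝ) : ℝ → ℝ :=
  fun x => (Real.cos (2 * x))⁻¹ * deriv φ x

/-!
Since `f' = f g` and `g' = 4 f²`, the operator `fD` maps the monomial `f^a g^b` to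
`a f^(a+1) g^(b+1) + 4 b f^(a+3) g^(b-1)`. Hence if `(fD)^(m+1) g = 2 (m+2)! ∑ₖ cₖ f^(m+3+2k) g^(m-2k)`,
applying `fD` once more produces the same shape with coefficients
`(m+3) c'ₖ₊₁ = (m+5+2k) cₖ₊₁ + 4 (m-2k) cₖ`. The numbers `Cₖ · C(m, 2k)` satisfy exactly this
recursion, by Pascal's rule, `(2k+1) C(m, 2k+1) = (m-2k) C(m, 2k)` and `(k+2) Cₖ₊₁ = 2 (2k+1) Cₖ`.
-/

/-- `gammaCoeff (n - 1) k` is the coefficient `F(n, k)`. -/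
def gammaCoeff (m k : ℕ) : ℕ := catalan k * m.choose (2 * k)

theorem succ_succ_mul_catalan_succ (n : ℕ) :
    (n + 2) * catalan (n + 1) = 2 * (2 * n + 1) * catalan n := by
  apply Nat.eq_of_mul_eq_mul_left n.succ_pos
  calc (n + 1) * ((n + 2) * catalan (n + 1)) = (n + 1) * (n + 1).centralBinom := by
        rw [← succ_mul_catalan_eq_centralBinom]
    _ = 2 * (2 * n + 1) * n.centralBinom := Nat.succ_mul_centralBinom_succ n
    _ = (n + 1) * (2 * (2 * n + 1) * catalan n) := by
        rw [← succ_mul_catalan_eq_centralBinom]; ring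

theorem gammaCoeff_zero_right (m : ℕ) : gammaCoeff m 0 = 1 := by
  simp [gammaCoeff]

theorem gammaCoeff_eq_zero_of_lt {m k : ℕ} (h : m < 2 * k) : gammaCoeff m k = 0 := by
  simp [gammaCoeff, Nat.choose_eq_zero_of_lt h]

theorem gammaCoeff_succ_succ (m j : ℕ) :
    (m + 3) * gammaCoeff (m + 1) (j + 1) =
      (m + 5 + 2 * j) * gammaCoeff m (j + 1) + 4 * (m - 2 * j) * gammaCoeff m j := by
  have hcat := succ_succ_mul_catalan_succ j
  have hpascal := Nat.choose_succ_succ' m (2 * j + 1)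
  have hup := Nat.add_one_mul_choose_eq m (2 * j + 1)
  have hdown := Nat.choose_succ_right_eq m (2 * j)
  apply Nat.eq_of_mul_eq_mul_left (Nat.succ_pos (j + 1))
  simp only [gammaCoeff, show 2 * (j + 1) = 2 * j + 1 + 1 by ring]
  zify at *
  linear_combination
    ((m + 3 : ℤ) * ((m + 1).choose (2 * j + 1 + 1) : ℤ)
        - (m + 5 + 2 * j) * (m.choose (2 * j + 1 + 1) : ℤ)) * hcat
      + 4 * (j + 2) * (catalan j : ℤ) * hdown
      + 2 * (catalan j : ℤ) * (2 * j + 1) * ((m + 5 + 2 * j) * hpascal + hup)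

theorem sum_gammaCoeff_succ_mul {R : Type*} [CommSemiring R] (m : ℕ) (z : ℕ → R) :
    (m + 3) * ∑ k ∈ range (m + 2), (gammaCoeff (m + 1) k : R) * z k =
      ∑ k ∈ range (m + 2), (m + 3 + 2 * k) * (gammaCoeff m k : R) * z k +
        ∑ k ∈ range (m + 1), 4 * ((m - 2 * k : ℕ) : R) * gammaCoeff m k * z (k + 1) := by
  have hrec (j : ℕ) : (m + 3 : R) * gammaCoeff (m + 1) (j + 1) =
      (m + 3 + 2 * (j + 1 : ℕ)) * gammaCoeff m (j + 1) +
        4 * ((m - 2 * j : ℕ) : R) * gammaCoeff m j := by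
    have h := congrArg (Nat.cast : ℕ → R) (gammaCoeff_succ_succ m j)
    push_cast at h
    rw [h]
    push_cast
    ring
  rw [mul_sum, sum_range_succ', sum_range_succ' _ (m + 1)]
  simp only [← mul_assoc, hrec, add_mul, sum_add_distrib, gammaCoeff_zero_right]
  push_cast
  ring

theorem fDop_congr {φ ψ : ℝ → ℝ} {x : ℝ} (h : φ =ᶠ[nhds x] ψ) : fDop φ x = fDop ψ x := by
  rw [fDop, fDop, h.deriv_eq]

theorem fDop_const_mul (c : ℝ) (φ : ℝ → ℝ) (x : ℝ) :
    fDop (fun y => c * φ y) x = c * fDop φ x := by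
  rw [fDop, fDop, deriv_const_mul_field']
  ring

namespace SecTan

open Real

noncomputable def f (x : ℝ) : ℝ := (cos (2 * x))⁻¹

noncomputable def g (x : ℝ) : ℝ := 2 * tan (2 * x)

variable {x : ℝ}

theorem eventually_cos_ne_zero (hx : cos (2 * x) ≠ 0) : ∀ᶠ y in nhds x, cos (2 * y) ≠ 0 :=
  (continuous_cos.comp (continuous_const.mul continuous_id)).continuousAt.eventually_ne hx

theorem hasDerivAt_f (hx : cos (2 * x) ≠ 0) : HasDerivAt f (f x * g x) x := by
  refine ((((hasDerivAt_id x).const_mul 2).cos).inv hx).congr_deriv ?_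
  simp only [f, g, tan_eq_sin_div_cos, id]
  field_simp

theorem hasDerivAt_g (hx : cos (2 * x) ≠ 0) : HasDerivAt g (4 * f x ^ 2) x := by
  refine (((hasDerivAt_tan hx).comp x ((hasDerivAt_id x).const_mul 2)).const_mul 2).congr_deriv ?_
  simp only [f]
  field_simp
  ring

theorem hasDerivAt_f_pow_mul_g_pow (hx : cos (2 * x) ≠ 0) (a b : ℕ) :
    HasDerivAt (fun y => f y ^ a * g y ^ b)
      (a * f x ^ a * g x ^ (b + 1) + 4 * b * f x ^ (a + 2) * g x ^ (b - 1)) x := by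
  refine (((hasDerivAt_f hx).fun_pow a).fun_mul ((hasDerivAt_g hx).fun_pow b)).congr_deriv ?_
  rcases a with _ | a
  · simp only [CharP.cast_eq_zero, zero_mul, pow_zero, zero_add, one_mul]
    ring
  · simp only [Nat.add_sub_cancel]
    ring

noncomputable def gammaPoly (m : ℕ) (x : ℝ) : ℝ :=
  ∑ k ∈ range (m + 1), (gammaCoeff m k : ℝ) * (f x ^ (m + 3 + 2 * k) * g x ^ (m - 2 * k))

theorem hasDerivAt_gammaPoly (hx : cos (2 * x) ≠ 0) (m : ℕ) :
    HasDerivAt (gammaPoly m) (∑ k ∈ range (m + 1), (gammaCoeff m k : ℝ) *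
      ((m + 3 + 2 * k : ℕ) * f x ^ (m + 3 + 2 * k) * g x ^ (m - 2 * k + 1) +
        4 * (m - 2 * k : ℕ) * f x ^ (m + 3 + 2 * k + 2) * g x ^ (m - 2 * k - 1))) x :=
  HasDerivAt.fun_sum fun _ _ => (hasDerivAt_f_pow_mul_g_pow hx _ _).const_mul _

theorem fDop_gammaPoly (hx : cos (2 * x) ≠ 0) (m : ℕ) :
    fDop (gammaPoly m) x = (m + 3) * gammaPoly (m + 1) x := by
  rw [fDop, (hasDerivAt_gammaPoly hx m).deriv, gammaPoly, sum_gammaCoeff_succ_mul,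
    sum_range_succ _ (m + 1), gammaCoeff_eq_zero_of_lt (by omega : m < 2 * (m + 1)),
    Nat.cast_zero, mul_zero, zero_mul, add_zero, ← sum_add_distrib, mul_sum]
  refine sum_congr rfl fun k _ => ?_
  change f x * _ = _
  rcases le_or_gt (2 * k) m with hk | hk
  · rw [show m + 1 - 2 * k = m - 2 * k + 1 by omega,
      show m + 1 - 2 * (k + 1) = m - 2 * k - 1 by omega]
    push_cast
    ring
  · simp [gammaCoeff_eq_zero_of_lt hk]

theorem fDop_iterate_g (m : ℕ) (hx : cos (2 * x) ≠ 0) :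
    fDop^[m + 1] g x = 2 * (m + 2).factorial * gammaPoly m x := by
  induction m generalizing x with
  | zero =>
    rw [Function.iterate_one, fDop, (hasDerivAt_g hx).deriv, gammaPoly, sum_range_one,
      gammaCoeff_zero_right]
    change f x * _ = _
    norm_num [Nat.factorial]
    ring
  | succ m ih =>
    rw [Function.iterate_succ_apply',
      fDop_congr (Filter.eventually_of_mem (eventually_cos_ne_zero hx) fun y hy => ih hy),
      fDop_const_mul, fDop_gammaPoly hx, Nat.factorial_succ (m + 2)]
    push_cast
    ring

end SecTan

/-- For all `n ≥ 1` and `x` with `cos(2x) ≠ 0`,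
`(fD)^n(g) = 2(n+1)! Σ_{k=0}^{⌊(n−1)/2⌋} F(n,k) f^{n+2+2k} g^{n−1−2k}`,
where `f = sec(2x)`, `g = 2 tan(2x)` and `F(n,k) = C_k·C(n−1,2k)`,
`C_k` being the `k`-th Catalan number. -/
theorem fD_iterate_tan (n : ℕ) (hn : 1 ≤ n) (x : ℝ) (hx : Real.cos (2 * x) ≠ 0) :
    fDop^[n] (fun x : ℝ => 2 * Real.tan (2 * x)) x =
      2 * ((n + 1).factorial : ℝ) * ∑ k ∈ Finset.range ((n - 1) / 2 + 1),
        (catalan k : ℝ) * ((n - 1).choose (2 * k)) *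
          ((Real.cos (2 * x))⁻¹) ^ (n + 2 + 2 * k) *
          (2 * Real.tan (2 * x)) ^ (n - 1 - 2 * k) := by
  obtain ⟨m, rfl⟩ : ∃ m, n = m + 1 := ⟨n - 1, by omega⟩
  have hvanish : ∀ k ∈ range (m + 1), k ∉ range (m / 2 + 1) →
      (gammaCoeff m k : ℝ) * (SecTan.f x ^ (m + 3 + 2 * k) * SecTan.g x ^ (m - 2 * k)) = 0 := by
    intro k _ hk
    rw [mem_range, not_lt] at hk
    rw [gammaCoeff_eq_zero_of_lt (by omega), Nat.cast_zero, zero_mul]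
  refine (SecTan.fDop_iterate_g m hx).trans ?_
  rw [SecTan.gammaPoly, ← sum_subset (range_subset_range.mpr (by omega)) hvanish]
  simp only [Nat.add_sub_cancel, gammaCoeff, Nat.cast_mul, mul_assoc]
  rfl
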